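/- Let n be a positive integer and let y₁, y₂, y₃, y₄ be pairwise distinct elements of ZMod n. Set z₁ := min(d(y₁,y₂), d(y₂,y₁)) and z₃ := min(d(y₃,y₄), d(y₄,y₃)). Suppose that either (d(y₃,y₁) ≤ d(y₃,y₄) and d(y₃,y₂) ≤ d(y₃,y₄)) or (d(y₄,y₁) ≤ d(y₄,y₃) and d(y₄,y₂) ≤ d(y₄,y₃)) (i.e., y₁ and y₂ both lie on one of the two arcs determined by y₃ and y₄). Then f(y₁,y₃) + f(y₁,y₄) + f(y₂,y₃) + f(y₂,y₄) ≥ 4·⌊n/2⌋·⌊(n−1)/2⌋ + z₁² + z₃² − Δ_n·Δ_{z₁+z₃}. -/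

import Mathlib

/-!
Since `2·C(d,2) + 2·C(n-d,2) = d² + (n-d)² - n`, the value `f(x,y)` is symmetric in `x, y`.
After swapping `y₃ ↔ y₄` and `y₁ ↔ y₂` if needed, placing `y₃` at `0` and `y₁, y₂, y₄` at
positions `a ≤ b ≤ t` of the circle turns the sum into
`(b-a)² + (n-t)² + (a+b-t)² + n² - 2n`, while `4⌊n/2⌋⌊(n-1)/2⌋ = n² - 2n + Δ_n`. As
`z₁ ≤ b - a` and `z₃ ≤ n - t`, only the parity correction remains: if `n` is odd, `z₁ + z₃` is
even and both bounds are tight, then `a + b - t` is odd, so its square is at least `1`.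
-/

/-- `C2 x` is the binomial-type expression `x(x-1)/2`. -/
def C2 (x : ℤ) : ℤ := x * (x - 1) / 2

/-- `dz x y` is the least nonnegative residue of `y - x` modulo `n`. -/
def dz {n : ℕ} (x y : ZMod n) : ℕ := (y - x).val

/-- `fz x y = C(d(x,y),2) + C(n - d(x,y),2)` for `x y : ZMod n`. -/
def fz {n : ℕ} (x y : ZMod n) : ℤ := C2 (dz x y) + C2 ((n : ℤ) - dz x y)

/-- `Δ k = 1` if `k` is odd and `0` if `k` is even. -/
def Δ (k : ℕ) : ℤ := if Odd k then 1 else 0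

lemma two_mul_C2 (x : ℤ) : 2 * C2 x = x * (x - 1) :=
  Int.mul_ediv_cancel' (Int.even_mul_pred_self x).two_dvd

lemma Δ_mul_one_sub_Δ (m k : ℕ) : Δ m * (1 - Δ k) = if Odd m ∧ Even k then 1 else 0 := by
  by_cases hm : Odd m <;> by_cases hk : Odd k <;> simp [Δ, hm, hk, ← Nat.not_odd_iff_even]

lemma four_mul_half_mul_half_pred (n : ℕ) :
    4 * (((n / 2 : ℕ) : ℤ) * (((n - 1) / 2 : ℕ) : ℤ)) = (n : ℤ) ^ 2 - 2 * n + Δ n := by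
  rcases Nat.even_or_odd' n with ⟨m, rfl | rfl⟩
  · rcases m with _ | m
    · simp [Δ]
    · have h₁ : 2 * (m + 1) / 2 = m + 1 := by omega
      have h₂ : (2 * (m + 1) - 1) / 2 = m := by omega
      simp only [h₁, h₂, Δ, Nat.not_odd_iff_even.mpr (even_two_mul _), if_false]
      push_cast
      ring
  · have h₁ : (2 * m + 1) / 2 = m := by omega
    have h₂ : (2 * m + 1 - 1) / 2 = m := by omega
    simp only [h₁, h₂, Δ, odd_two_mul_add_one, if_true]
    push_cast
    ring

lemma Δ_mul_one_sub_Δ_add_sq_add_sq_le {n z₁ z₃ : ℕ} {u v w : ℤ}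
    (h₁ : (z₁ : ℤ) ≤ u) (h₃ : (z₃ : ℤ) ≤ v) (hw : Even (w + u + v + n)) :
    Δ n * (1 - Δ (z₁ + z₃)) + z₁ ^ 2 + z₃ ^ 2 ≤ u ^ 2 + v ^ 2 + w ^ 2 := by
  have hz₁ : (z₁ : ℤ) ^ 2 ≤ u ^ 2 := pow_le_pow_left₀ (Int.natCast_nonneg _) h₁ 2
  have hz₃ : (z₃ : ℤ) ^ 2 ≤ v ^ 2 := pow_le_pow_left₀ (Int.natCast_nonneg _) h₃ 2
  rw [Δ_mul_one_sub_Δ]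
  split_ifs with hpar
  swap
  · nlinarith [sq_nonneg w]
  rcases h₁.lt_or_eq with h₁ | rfl
  · nlinarith [sq_nonneg w]
  rcases h₃.lt_or_eq with h₃ | rfl
  · nlinarith [sq_nonneg w]
  -- now `u = z₁` and `v = z₃`, so `w ≡ n + z₁ + z₃ ≡ 1 (mod 2)`
  have hw₀ : w ≠ 0 := by
    rintro rfl
    obtain ⟨⟨k, hk⟩, ⟨l, hl⟩⟩ := hpar
    obtain ⟨j, hj⟩ := hw
    omega
  have : 0 < w ^ 2 := by positivity
  linarith

lemma two_mul_fz {n : ℕ} (x y : ZMod n) : 2 * fz x y = (dz x y : ℤ) ^ 2 + (n - dz x y) ^ 2 - n := by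
  rw [fz, mul_add, two_mul_C2, two_mul_C2]
  ring

section dz

variable {n : ℕ} [NeZero n]

lemma dz_lt (x y : ZMod n) : dz x y < n := ZMod.val_lt _

lemma dz_comm_of_ne {x y : ZMod n} (h : x ≠ y) : dz y x = n - dz x y := by
  have : NeZero (y - x) := ⟨sub_ne_zero.mpr h.symm⟩
  rw [dz, ← neg_sub, ZMod.val_neg_of_ne_zero, dz]

lemma dz_add_dz_comm_le (x y : ZMod n) : dz x y + dz y x ≤ n := by
  by_cases h : x = y
  · simp [h, dz]
  · have := dz_lt x y
    rw [dz_comm_of_ne h]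
    omega

lemma dz_eq_sub {c x y : ZMod n} (h : dz c x ≤ dz c y) : dz x y = dz c y - dz c x := by
  rw [dz, dz, dz, ← ZMod.val_sub h, sub_sub_sub_cancel_right]

lemma fz_comm (x y : ZMod n) : fz x y = fz y x := by
  by_cases h : x = y
  · rw [h]
  · rw [fz, fz, dz_comm_of_ne h, Nat.cast_sub (dz_lt x y).le, sub_sub_cancel, add_comm]

lemma sum_fz_eq {y₁ y₂ y₃ y₄ : ZMod n} (h₁ : dz y₃ y₁ ≤ dz y₃ y₄) (h₂ : dz y₃ y₂ ≤ dz y₃ y₄) :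
    fz y₁ y₃ + fz y₁ y₄ + fz y₂ y₃ + fz y₂ y₄ =
      ((dz y₃ y₂ : ℤ) - dz y₃ y₁) ^ 2 + ((n : ℤ) - dz y₃ y₄) ^ 2
        + ((dz y₃ y₁ : ℤ) + dz y₃ y₂ - dz y₃ y₄) ^ 2 + (n : ℤ) ^ 2 - 2 * n := by
  have e₁ := two_mul_fz y₃ y₁
  have e₂ := two_mul_fz y₃ y₂
  have e₁₄ := two_mul_fz y₁ y₄
  have e₂₄ := two_mul_fz y₂ y₄
  rw [dz_eq_sub h₁, Nat.cast_sub h₁] at e₁₄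
  rw [dz_eq_sub h₂, Nat.cast_sub h₂] at e₂₄
  rw [fz_comm y₁, fz_comm y₂]
  apply mul_left_cancel₀ (two_ne_zero (α := ℤ))
  linear_combination e₁ + e₂ + e₁₄ + e₂₄

end dz

theorem stmt_10_general (n : ℕ) (hn : 0 < n) (y₁ y₂ y₃ y₄ : ZMod n)
    (z₁ z₃ : ℕ) (hz₁ : z₁ = min (dz y₁ y₂) (dz y₂ y₁))
    (hz₃ : z₃ = min (dz y₃ y₄) (dz y₄ y₃))
    (harc : (dz y₃ y₁ ≤ dz y₃ y₄ ∧ dz y₃ y₂ ≤ dz y₃ y₄) ∨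
            (dz y₄ y₁ ≤ dz y₄ y₃ ∧ dz y₄ y₂ ≤ dz y₄ y₃)) :
    4 * (((n / 2 : ℕ) : ℤ) * (((n - 1) / 2 : ℕ) : ℤ)) + (z₁ : ℤ) ^ 2 + (z₃ : ℤ) ^ 2
        - Δ n * Δ (z₁ + z₃) ≤
      fz y₁ y₃ + fz y₁ y₄ + fz y₂ y₃ + fz y₂ y₄ := by
  have : NeZero n := ⟨hn.ne'⟩
  wlog h₃₄ : dz y₃ y₁ ≤ dz y₃ y₄ ∧ dz y₃ y₂ ≤ dz y₃ y₄ generalizing y₃ y₄ z₃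
  · have := this y₄ y₃ z₃ (by rw [hz₃, min_comm]) harc.symm (harc.resolve_left h₃₄)
    linarith
  wlog h₁₂ : dz y₃ y₁ ≤ dz y₃ y₂ generalizing y₁ y₂ z₁
  · have := this y₂ y₁ z₁ (by rw [hz₁, min_comm]) (by tauto) h₃₄.symm (by omega)
    linarith
  have hu : (z₁ : ℤ) ≤ dz y₃ y₂ - dz y₃ y₁ := by
    have := hz₁ ▸ min_le_left (dz y₁ y₂) (dz y₂ y₁)
    rw [dz_eq_sub h₁₂] at this
    omega
  have hv : (z₃ : ℤ) ≤ n - dz y₃ y₄ := by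
    have := dz_add_dz_comm_le y₃ y₄
    omega
  have key := Δ_mul_one_sub_Δ_add_sq_add_sq_le (n := n)
    (w := (dz y₃ y₁ : ℤ) + dz y₃ y₂ - dz y₃ y₄) hu hv ⟨dz y₃ y₂ - dz y₃ y₄ + n, by ring⟩
  rw [four_mul_half_mul_half_pred, sum_fz_eq h₃₄.1 h₃₄.2]
  linarith

theorem stmt_10 (n : ℕ) (hn : 0 < n) (y₁ y₂ y₃ y₄ : ZMod n)
    (h12 : y₁ ≠ y₂) (h13 : y₁ ≠ y₃) (h14 : y₁ ≠ y₄)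
    (h23 : y₂ ≠ y₃) (h24 : y₂ ≠ y₄) (h34 : y₃ ≠ y₄)
    (z₁ z₃ : ℕ) (hz₁ : z₁ = min (dz y₁ y₂) (dz y₂ y₁))
    (hz₃ : z₃ = min (dz y₃ y₄) (dz y₄ y₃))
    (harc : (dz y₃ y₁ ≤ dz y₃ y₄ ∧ dz y₃ y₂ ≤ dz y₃ y₄) ∨
            (dz y₄ y₁ ≤ dz y₄ y₃ ∧ dz y₄ y₂ ≤ dz y₄ y₃)) :
    4 * (((n / 2 : ℕ) : ℤ) * (((n - 1) / 2 : ℕ) : ℤ)) + (z₁ : ℤ) ^ 2 + (z₃ : ℤ) ^ 2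
        - Δ n * Δ (z₁ + z₃) ≤
      fz y₁ y₃ + fz y₁ y₄ + fz y₂ y₃ + fz y₂ y₄ :=
  stmt_10_general n hn y₁ y₂ y₃ y₄ z₁ z₃ hz₁ hz₃ harc
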